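/- Under Hypothesis (H), set f = P/Q and for each natural number i let D_x^i(f) = D_y(g_i) + r_i be the unique decomposition with g_i, r_i in k(x,y) proper as rational functions in y over k(x) and with the denominator of r_i (in k(x)[y]) squarefree. Then: (1) for η_0, …, η_ρ in k(x) with η_ρ ≠ 0, the operator L = Σ_{i=0}^{ρ} η_i·D_x^i is a telescoper of order ρ for f with certificate Σ_{i=0}^{ρ} η_i·g_i if and only if Σ_{i=0}^{ρ} η_i·r_i = 0; (2) consequently, ρ is the smallest integer such that r_0, …, r_ρ are linearly dependent over k(x) if and only if the corresponding operator Σ_{i=0}^{ρ} η_i·D_x^i (for any nontrivial dependence Σ η_i r_i = 0) is a minimal telescoper for f, with certificate Σ_{i=0}^{ρ} η_i·g_i. -/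

import Mathlib

open Polynomial

noncomputable section

/-- A map is a derivation: it is additive and satisfies the Leibniz rule. -/
def IsDeriv {F : Type*} [CommRing F] (D : F → F) : Prop :=
  (∀ a b, D (a + b) = D a + D b) ∧ ∀ a b, D (a * b) = a * D b + b * D a

/-- Degree in `x` of an element of `k[x][y]` (inner variable `x`, outer variable `y`). -/
def degX {k : Type*} [Field k] (Q : Polynomial (Polynomial k)) : ℕ :=
  Q.support.sup fun i => (Q.coeff i).natDegree

/-- Partial derivative with respect to `x` on `k[x][y]`. -/
def derivX {k : Type*} [Field k] (Q : Polynomial (Polynomial k)) : Polynomial (Polynomial k) :=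
  Q.sum fun i a => Polynomial.C (Polynomial.derivative a) * Polynomial.X ^ i

/-- The embedding `k[x][y] → k(x)(y)`. -/
def toF {k : Type*} [Field k] : Polynomial (Polynomial k) →+* RatFunc (RatFunc k) :=
  (algebraMap (Polynomial (RatFunc k)) (RatFunc (RatFunc k))).comp
    (Polynomial.mapRingHom (algebraMap (Polynomial k) (RatFunc k)))

/-- The embedding `k(x) → k(x)(y)`. -/
def ratToF {k : Type*} [Field k] : RatFunc k →+* RatFunc (RatFunc k) :=
  (algebraMap (Polynomial (RatFunc k)) (RatFunc (RatFunc k))).comp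
    (Polynomial.C : RatFunc k →+* Polynomial (RatFunc k))

/-- The embedding `k(x)[y] → k(x)(y)`. -/
def kyToF {k : Type*} [Field k] : Polynomial (RatFunc k) →+* RatFunc (RatFunc k) :=
  algebraMap (Polynomial (RatFunc k)) (RatFunc (RatFunc k))

/-- The embedding `k[x][y] → k(x)[y]`. -/
def toKy {k : Type*} [Field k] : Polynomial (Polynomial k) →+* Polynomial (RatFunc k) :=
  Polynomial.mapRingHom (algebraMap (Polynomial k) (RatFunc k))

/-- The embedding `k[y] → k[x][y]` (a polynomial in `y` viewed in `k[x][y]`). -/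
def yToXY {k : Type*} [Field k] : Polynomial k →+* Polynomial (Polynomial k) :=
  Polynomial.mapRingHom (Polynomial.C : k →+* Polynomial k)

/-- The Hermite matrix associated with a factorisation `Q = Qs * Qneg`, with respect to the
monomial bases: its columns are the coefficient vectors (in `y`, coefficients in `k[x]`) of
`Qs * D_y(y^j) - E * y^j` for `j < dm` (where `E = Qs * D_y(Qneg) / Qneg`) and of
`Qneg * y^j` for `j < dy - dm`. -/
def hermiteMat {k : Type*} [Field k] (Qs Qneg E : Polynomial (Polynomial k)) (dy dm : ℕ) :
    Matrix (Fin dy) (Fin dy) (Polynomial k) :=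
  Matrix.of fun i j =>
    if (j : ℕ) < dm then
      (Qs * Polynomial.derivative (Polynomial.X ^ (j : ℕ)) - E * Polynomial.X ^ (j : ℕ)).coeff i
    else
      (Qneg * Polynomial.X ^ ((j : ℕ) - dm)).coeff i

/-!
The whole statement rests on one fact: if `D` is a derivation of `K(y)` extending `d/dy` and
`D h` is proper with squarefree denominator, then `D h = 0` (characteristic zero). Indeed, if an
irreducible `p` divides the denominator of `h` exactly `m ≥ 1` times, then, as `p ∤ p'`, it divides
the denominator of `D h` at least `m + 1 ≥ 2` times; so `h` is a polynomial, hence so is `D h`,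
which is then proper only if it vanishes.

Proper fractions with squarefree denominators form a `k(x)`-subspace, so whenever
`∑ ηᵢ D_x^i f = D_y g'`, the combination `∑ ηᵢ rᵢ = D_y (g' - ∑ ηᵢ gᵢ)` vanishes. Part (2) is then
the elementary fact that a linear dependence of minimal length has a nonzero last coefficient.
-/

namespace Polynomial

variable {K : Type*} [Field K] [CharZero K]

theorem exists_wronskian_eq_pow_mul_not_dvd {p n e : K[X]} (hp : Irreducible p)
    (hpn : ¬ p ∣ n) (hpe : ¬ p ∣ e) (m : ℕ) :
    ∃ W, wronskian (p ^ (m + 1) * e) n = p ^ m * W ∧ ¬ p ∣ W := by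
  have hprime : Prime p := hp.prime
  refine ⟨p * (derivative n * e - n * derivative e) - (m + 1 : ℕ) * n * derivative p * e,
    by rw [wronskian, derivative_mul, derivative_pow, ← C_eq_natCast]; push_cast; ring,
    fun hW => ?_⟩
  have hm : ¬ p ∣ ((m + 1 : ℕ) : K[X]) := fun h => hp.not_isUnit <| isUnit_of_dvd_unit h <| by
    rw [← C_eq_natCast]; exact isUnit_C.2 (Ne.isUnit (Nat.cast_ne_zero.2 m.succ_ne_zero))
  have hp' : ¬ p ∣ derivative p := fun h => hp.not_isUnit (hp.separable.isUnit_of_dvd' dvd_rfl h)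
  refine hprime.not_dvd_mul (hprime.not_dvd_mul (hprime.not_dvd_mul hm hpn) hp') hpe ?_
  exact (dvd_sub_right (dvd_mul_right p _)).1 hW

end Polynomial

namespace RatFunc

open UniqueFactorizationMonoid

variable {K : Type*} [Field K]

variable (K) in
def sqfreeProperFractions : Submodule K (RatFunc K) where
  carrier := {s | ∃ A B : K[X], Squarefree B ∧ A.degree < B.degree ∧
    s = algebraMap K[X] (RatFunc K) A / algebraMap K[X] (RatFunc K) B}
  zero_mem' := ⟨0, 1, squarefree_one, by simp, by simp⟩
  add_mem' := by
    classical
    rintro _ _ ⟨A₁, B₁, hB₁, hd₁, rfl⟩ ⟨A₂, B₂, hB₂, hd₂, rfl⟩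
    have hB0 : B₁ * B₂ ≠ 0 := mul_ne_zero hB₁.ne_zero hB₂.ne_zero
    obtain ⟨Q₁, hQ₁⟩ : B₁ ∣ radical (B₁ * B₂) :=
      (dvd_radical_iff hB₁.isRadical hB0).2 (dvd_mul_right _ _)
    obtain ⟨Q₂, hQ₂⟩ : B₂ ∣ radical (B₁ * B₂) :=
      (dvd_radical_iff hB₂.isRadical hB0).2 (dvd_mul_left _ _)
    have hQ₁0 : Q₁ ≠ 0 := right_ne_zero_of_mul (hQ₁ ▸ radical_ne_zero)
    have hQ₂0 : Q₂ ≠ 0 := right_ne_zero_of_mul (hQ₂ ▸ radical_ne_zero)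
    refine ⟨A₁ * Q₁ + A₂ * Q₂, radical (B₁ * B₂), squarefree_radical, ?_, ?_⟩
    · refine (degree_add_le _ _).trans_lt (max_lt ?_ ?_)
      · rw [hQ₁, degree_mul, degree_mul]
        exact WithBot.add_lt_add_right (degree_ne_bot.2 hQ₁0) hd₁
      · rw [hQ₂, degree_mul, degree_mul]
        exact WithBot.add_lt_add_right (degree_ne_bot.2 hQ₂0) hd₂
    · have hexpand : ∀ A B Q : K[X], Q ≠ 0 → algebraMap K[X] (RatFunc K) A / algebraMap _ _ B =
          algebraMap K[X] (RatFunc K) (A * Q) / algebraMap _ _ (B * Q) := fun A B Q hQ => by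
        rw [map_mul, map_mul, mul_div_mul_right _ _ (algebraMap_ne_zero hQ)]
      rw [hexpand A₁ B₁ Q₁ hQ₁0, hexpand A₂ B₂ Q₂ hQ₂0, ← hQ₁, ← hQ₂, ← add_div, ← map_add]
  smul_mem' := by
    rintro c _ ⟨A, B, hB, hd, rfl⟩
    refine ⟨c • A, B, hB, (degree_smul_le c A).trans_lt hd, ?_⟩
    rw [Polynomial.smul_eq_C_mul, Algebra.smul_def, map_mul, mul_div_assoc,
      IsScalarTower.algebraMap_apply K K[X], Polynomial.algebraMap_eq]

theorem mem_sqfreeProperFractions_iff {s : RatFunc K} :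
    s ∈ sqfreeProperFractions K ↔ Squarefree s.denom ∧ s.num.degree < s.denom.degree := by
  refine ⟨?_, fun ⟨hsq, hdeg⟩ => ⟨s.num, s.denom, hsq, hdeg, (num_div_denom s).symm⟩⟩
  rintro ⟨A, B, hB, hdeg, rfl⟩
  set s := algebraMap K[X] (RatFunc K) A / algebraMap K[X] (RatFunc K) B
  refine ⟨hB.squarefree_of_dvd ((denom_dvd hB.ne_zero).2 ⟨A, rfl⟩), ?_⟩
  have hcross : s.num * B = A * s.denom := (num_mul_eq_mul_denom_iff hB.ne_zero).2 rfl
  rcases eq_or_ne s.num 0 with hnum | hnum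
  · rw [hnum, degree_zero]
    exact bot_lt_iff_ne_bot.2 (degree_ne_bot.2 s.denom_ne_zero)
  have hA : A ≠ 0 := by rintro rfl; simp [hnum, hB.ne_zero] at hcross
  have hsum := congrArg natDegree hcross
  rw [natDegree_mul hnum hB.ne_zero, natDegree_mul hA s.denom_ne_zero] at hsum
  have hlt := natDegree_lt_natDegree hA hdeg
  exact degree_lt_degree (by omega)

theorem sq_dvd_denom_wronskian_div_sq [CharZero K] {n d p : K[X]} (hp : Irreducible p) (hpd : p ∣ d)
    (hpn : ¬ p ∣ n) (hd : d ≠ 0) :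
    p ^ 2 ∣ (algebraMap K[X] (RatFunc K) (wronskian d n) /
      algebraMap K[X] (RatFunc K) (d ^ 2)).denom := by
  set s := algebraMap K[X] (RatFunc K) (wronskian d n) / algebraMap K[X] (RatFunc K) (d ^ 2)
  have hcross : s.num * d ^ 2 = wronskian d n * s.denom :=
    (num_mul_eq_mul_denom_iff (pow_ne_zero 2 hd)).2 rfl
  obtain ⟨_ | m, e, hpe, rfl⟩ := WfDvdMonoid.max_power_factor hd hp
  · exact absurd (by simpa using hpd) hpe
  obtain ⟨W, hW, hpW⟩ := exists_wronskian_eq_pow_mul_not_dvd hp hpn hpe m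
  rw [hW] at hcross
  have key : p ^ (m + 2) * (s.num * e ^ 2) = W * s.denom := by
    apply mul_left_cancel₀ (pow_ne_zero m hp.ne_zero)
    linear_combination hcross
  have := hp.prime.pow_dvd_of_dvd_mul_left (m + 2) hpW ⟨_, key.symm⟩
  exact (pow_dvd_pow p (by omega)).trans this

end RatFunc

namespace IsDeriv

section LinearMap

variable {R F : Type*} [CommRing R] [CommRing F] [Algebra R F] {D : F → F}

def toLinearMap (hD : IsDeriv D) (hconst : ∀ c : R, D (algebraMap R F c) = 0) : F →ₗ[R] F where
  toFun := D
  map_add' := hD.1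
  map_smul' c a := by
    rw [Algebra.smul_def, hD.2, hconst, mul_zero, add_zero, RingHom.id_apply, Algebra.smul_def]

@[simp]
theorem toLinearMap_apply (hD : IsDeriv D) (hconst : ∀ c : R, D (algebraMap R F c) = 0)
    (a : F) : hD.toLinearMap hconst a = D a := rfl

end LinearMap

open RatFunc

variable {K : Type*} [Field K] {D : RatFunc K → RatFunc K}

theorem apply_eq_wronskian_div (hD : IsDeriv D)
    (hval : ∀ A : K[X], D (algebraMap K[X] (RatFunc K) A) =
      algebraMap K[X] (RatFunc K) (derivative A)) (h : RatFunc K) :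
    D h = algebraMap K[X] (RatFunc K) (wronskian h.denom h.num) /
      algebraMap K[X] (RatFunc K) (h.denom ^ 2) := by
  have hd : algebraMap K[X] (RatFunc K) h.denom ≠ 0 := algebraMap_ne_zero h.denom_ne_zero
  have hnum : h * algebraMap K[X] (RatFunc K) h.denom = algebraMap K[X] (RatFunc K) h.num :=
    (div_eq_iff hd).1 (num_div_denom h) |>.symm
  have hleibniz := hD.2 h (algebraMap K[X] (RatFunc K) h.denom)
  rw [hnum, hval, hval] at hleibniz
  rw [map_pow, eq_div_iff (pow_ne_zero 2 hd), wronskian, map_sub, map_mul, map_mul]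
  linear_combination (-(algebraMap K[X] (RatFunc K) h.denom)) * hleibniz -
    (algebraMap K[X] (RatFunc K) (derivative h.denom)) * hnum

theorem eq_zero_of_mem_sqfreeProperFractions [CharZero K] (hD : IsDeriv D)
    (hval : ∀ A : K[X], D (algebraMap K[X] (RatFunc K) A) =
      algebraMap K[X] (RatFunc K) (derivative A)) {h : RatFunc K}
    (hmem : D h ∈ sqfreeProperFractions K) : D h = 0 := by
  obtain ⟨hsq, hdeg⟩ := mem_sqfreeProperFractions_iff.1 hmem
  have hunit : IsUnit h.denom := by
    by_contra hnu
    obtain ⟨p, hp, hpd⟩ := WfDvdMonoid.exists_irreducible_factor hnu h.denom_ne_zero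
    have hpn : ¬ p ∣ h.num := fun hpn =>
      hp.not_isUnit ((isCoprime_num_denom h).isUnit_of_dvd' hpn hpd)
    have hp2 := sq_dvd_denom_wronskian_div_sq hp hpd hpn h.denom_ne_zero
    rw [← apply_eq_wronskian_div hD hval, sq] at hp2
    exact hp.not_isUnit (hsq p hp2)
  have hpoly : h = algebraMap K[X] (RatFunc K) h.num := by
    rw [← num_div_denom h, (monic_denom h).isUnit_iff.1 hunit, map_one, div_one, num_algebraMap]
  rw [hpoly, hval] at hdeg ⊢
  rw [num_algebraMap, denom_algebraMap, degree_one, Nat.WithBot.lt_zero_iff, degree_eq_bot] at hdeg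
  rw [hdeg, map_zero]

end IsDeriv

section Dependence

variable {R M : Type*} [Semiring R] [AddCommMonoid M] [Module R M] (v : ℕ → M)

theorem exists_dependence_of_last_eq_zero {m : ℕ} {η : Fin (m + 2) → R}
    (hη : ∃ i, η i ≠ 0) (hlast : η (Fin.last (m + 1)) = 0) (hsum : ∑ i, η i • v i = 0) :
    ∃ η' : Fin (m + 1) → R, (∃ i, η' i ≠ 0) ∧ ∑ i, η' i • v i = 0 := by
  refine ⟨fun j => η j.castSucc, ?_, ?_⟩
  · obtain ⟨i, hi⟩ := hη
    have hil : i ≠ Fin.last (m + 1) := by rintro rfl; exact hi hlast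
    exact ⟨i.castPred hil, by simpa only [Fin.castSucc_castPred] using hi⟩
  · rwa [Fin.sum_univ_castSucc, hlast, zero_smul, add_zero] at hsum

theorem exists_dependence_last_ne_zero {ρ : ℕ} {η : Fin (ρ + 1) → R}
    (hη : ∃ i, η i ≠ 0) (hsum : ∑ i, η i • v i = 0) :
    ∃ ρ' ≤ ρ, ∃ η' : Fin (ρ' + 1) → R, η' (Fin.last ρ') ≠ 0 ∧ ∑ i, η' i • v i = 0 := by
  induction ρ with
  | zero =>
    obtain ⟨i, hi⟩ := hη
    exact ⟨0, le_rfl, η, by rwa [Subsingleton.elim (α := Fin 1) (Fin.last 0) i], hsum⟩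
  | succ m ih =>
    by_cases hlast : η (Fin.last (m + 1)) = 0
    · obtain ⟨η', hη', hsum'⟩ := exists_dependence_of_last_eq_zero v hη hlast hsum
      obtain ⟨ρ', hρ', η'', hlast'', hsum''⟩ := ih hη' hsum'
      exact ⟨ρ', hρ'.trans m.le_succ, η'', hlast'', hsum''⟩
    · exact ⟨m + 1, le_rfl, η, hlast, hsum⟩

theorem minimal_dependence_iff {ρ : ℕ} {η : Fin (ρ + 1) → R}
    (hη : ∃ i, η i ≠ 0) (hsum : ∑ i, η i • v i = 0) :
    (∀ ρ' < ρ, ¬ ∃ η' : Fin (ρ' + 1) → R, (∃ i, η' i ≠ 0) ∧ ∑ i, η' i • v i = 0) ↔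
      η (Fin.last ρ) ≠ 0 ∧ ∀ (ρ' : ℕ) (η' : Fin (ρ' + 1) → R),
        η' (Fin.last ρ') ≠ 0 → ∑ i, η' i • v i = 0 → ρ ≤ ρ' := by
  constructor
  · intro hmin
    refine ⟨fun hlast => ?_, fun ρ' η' hlast' hsum' => ?_⟩
    · cases ρ with
      | zero =>
        obtain ⟨i, hi⟩ := hη
        exact hi (by rwa [Subsingleton.elim (α := Fin 1) i (Fin.last 0)])
      | succ m =>
        exact hmin m m.lt_succ_self (exists_dependence_of_last_eq_zero v hη hlast hsum)
    · by_contra! hlt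
      exact hmin ρ' hlt ⟨η', ⟨_, hlast'⟩, hsum'⟩
  · rintro ⟨-, hmin⟩ ρ' hρ' ⟨η', hη', hsum'⟩
    obtain ⟨ρ'', hρ'', η'', hlast'', hsum''⟩ := exists_dependence_last_ne_zero v hη' hsum'
    exact absurd (hmin ρ'' η'' hlast'' hsum'') (by omega)

end Dependence

theorem ratToF_mul_eq_smul {k : Type*} [Field k] (c : RatFunc k) (a : RatFunc (RatFunc k)) :
    ratToF c * a = c • a := by
  rw [Algebra.smul_def, IsScalarTower.algebraMap_apply (RatFunc k) (RatFunc k)[X], algebraMap_eq]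
  rfl

theorem stmt_8_general {k : Type*} [Field k] [CharZero k]
    (P Q : Polynomial (Polynomial k))
    (Dy : RatFunc (RatFunc k) → RatFunc (RatFunc k)) (hDy : IsDeriv Dy)
    (hDyval : ∀ A : Polynomial (RatFunc k), Dy (kyToF A) = kyToF (Polynomial.derivative A))
    (Dx : RatFunc (RatFunc k) → RatFunc (RatFunc k))
    (g r : ℕ → RatFunc (RatFunc k))
    (hdec : ∀ i : ℕ, Dx^[i] (toF P / toF Q) = Dy (g i) + r i)
    (hrprop : ∀ i : ℕ, (r i).num.degree < (r i).denom.degree)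
    (hrsq : ∀ i : ℕ, Squarefree (r i).denom) :
    (∀ (ρ : ℕ) (η : Fin (ρ + 1) → RatFunc k), η (Fin.last ρ) ≠ 0 →
      ((∑ i : Fin (ρ + 1), ratToF (η i) * Dx^[(i : ℕ)] (toF P / toF Q) =
          Dy (∑ i : Fin (ρ + 1), ratToF (η i) * g (i : ℕ))) ↔
        ∑ i : Fin (ρ + 1), ratToF (η i) * r (i : ℕ) = 0)) ∧
    (∀ (ρ : ℕ) (η : Fin (ρ + 1) → RatFunc k), (∃ i, η i ≠ 0) →
      (∑ i : Fin (ρ + 1), ratToF (η i) * r (i : ℕ) = 0) →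
      ((∀ ρ' < ρ, ¬ ∃ η' : Fin (ρ' + 1) → RatFunc k, (∃ i, η' i ≠ 0) ∧
          ∑ i : Fin (ρ' + 1), ratToF (η' i) * r (i : ℕ) = 0)
        ↔
       (η (Fin.last ρ) ≠ 0 ∧
        (∑ i : Fin (ρ + 1), ratToF (η i) * Dx^[(i : ℕ)] (toF P / toF Q) =
          Dy (∑ i : Fin (ρ + 1), ratToF (η i) * g (i : ℕ))) ∧
        ∀ (ρ' : ℕ) (η' : Fin (ρ' + 1) → RatFunc k), η' (Fin.last ρ') ≠ 0 →
          (∃ g' : RatFunc (RatFunc k),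
            ∑ i : Fin (ρ' + 1), ratToF (η' i) * Dx^[(i : ℕ)] (toF P / toF Q) = Dy g') →
          ρ ≤ ρ'))) := by
  have hconst (c : RatFunc k) : Dy (algebraMap (RatFunc k) (RatFunc (RatFunc k)) c) = 0 := by
    rw [IsScalarTower.algebraMap_apply (RatFunc k) (RatFunc k)[X], algebraMap_eq]
    exact (hDyval (C c)).trans (by rw [derivative_C, map_zero])
  simp only [ratToF_mul_eq_smul]
  have hsplit (ρ : ℕ) (η : Fin (ρ + 1) → RatFunc k) : ∑ i, η i • Dx^[i] (toF P / toF Q) =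
      Dy (∑ i, η i • g i) + ∑ i, η i • r i := by
    simp only [hdec, smul_add, Finset.sum_add_distrib, ← hDy.toLinearMap_apply hconst, map_sum,
      map_smul]
  have hcert (ρ : ℕ) (η : Fin (ρ + 1) → RatFunc k) :
      ∑ i, η i • Dx^[i] (toF P / toF Q) = Dy (∑ i, η i • g i) ↔ ∑ i, η i • r i = 0 := by
    rw [hsplit, add_eq_left]
  have htele (ρ : ℕ) (η : Fin (ρ + 1) → RatFunc k) :
      (∃ g', ∑ i, η i • Dx^[i] (toF P / toF Q) = Dy g') ↔ ∑ i, η i • r i = 0 := by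
    refine ⟨fun ⟨g', hg'⟩ => ?_, fun h => ⟨_, (hcert ρ η).2 h⟩⟩
    have hres : ∑ i, η i • r i = Dy (g' - ∑ i, η i • g i) := by
      rw [← hDy.toLinearMap_apply hconst, map_sub, hDy.toLinearMap_apply, hDy.toLinearMap_apply,
        ← hg', hsplit, add_sub_cancel_left]
    rw [hres]
    refine hDy.eq_zero_of_mem_sqfreeProperFractions hDyval ?_
    rw [← hres]
    exact Submodule.sum_mem _ fun i _ => Submodule.smul_mem _ _ <|
      RatFunc.mem_sqfreeProperFractions_iff.2 ⟨hrsq i, hrprop i⟩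
  refine ⟨fun ρ η _ => hcert ρ η, fun ρ η hη hsum => ?_⟩
  rw [minimal_dependence_iff r hη hsum]
  simp only [htele, (hcert ρ η).2 hsum, true_and]

/-- Lemma `le:minimaltele`. Under Hypothesis (H), with `f = P/Q` and, for
each `i`, the (unique) decomposition `D_x^i(f) = D_y(gᵢ) + rᵢ` with `gᵢ, rᵢ` proper (in `y`
over `k(x)`) and the denominator of `rᵢ` squarefree:
(1) for `η₀, …, η_ρ ∈ k(x)` with `η_ρ ≠ 0`, the operator `L = ∑ ηᵢ·D_x^i` is a telescoper of
order `ρ` for `f` with certificate `∑ ηᵢ·gᵢ` iff `∑ ηᵢ·rᵢ = 0`;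
(2) for any nontrivial dependence `∑ ηᵢ·rᵢ = 0` with `i ≤ ρ`: `ρ` is smallest such that
`r₀, …, r_ρ` are linearly dependent over `k(x)` iff `∑ ηᵢ·D_x^i` is a minimal telescoper for
`f` with certificate `∑ ηᵢ·gᵢ`. -/
theorem stmt_8 {k : Type*} [Field k] [CharZero k]
    (P Q : Polynomial (Polynomial k))
    (hP : P ≠ 0) (hQ : Q ≠ 0)
    (hPQdeg : P.degree < Q.degree)
    (hPQcop : IsRelPrime P Q)
    (hQprimY : Q.IsPrimitive)
    (Dy : RatFunc (RatFunc k) → RatFunc (RatFunc k)) (hDy : IsDeriv Dy)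
    (hDyval : ∀ A : Polynomial (RatFunc k), Dy (kyToF A) = kyToF (Polynomial.derivative A))
    (Dx : RatFunc (RatFunc k) → RatFunc (RatFunc k)) (hDx : IsDeriv Dx)
    (hDxval : ∀ A : Polynomial (Polynomial k), Dx (toF A) = toF (derivX A))
    (g r : ℕ → RatFunc (RatFunc k))
    (hdec : ∀ i : ℕ, Dx^[i] (toF P / toF Q) = Dy (g i) + r i)
    (hgprop : ∀ i : ℕ, (g i).num.degree < (g i).denom.degree)
    (hrprop : ∀ i : ℕ, (r i).num.degree < (r i).denom.degree)
    (hrsq : ∀ i : ℕ, Squarefree (r i).denom) :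
    (∀ (ρ : ℕ) (η : Fin (ρ + 1) → RatFunc k), η (Fin.last ρ) ≠ 0 →
      ((∑ i : Fin (ρ + 1), ratToF (η i) * Dx^[(i : ℕ)] (toF P / toF Q) =
          Dy (∑ i : Fin (ρ + 1), ratToF (η i) * g (i : ℕ))) ↔
        ∑ i : Fin (ρ + 1), ratToF (η i) * r (i : ℕ) = 0)) ∧
    (∀ (ρ : ℕ) (η : Fin (ρ + 1) → RatFunc k), (∃ i, η i ≠ 0) →
      (∑ i : Fin (ρ + 1), ratToF (η i) * r (i : ℕ) = 0) →
      ((∀ ρ' < ρ, ¬ ∃ η' : Fin (ρ' + 1) → RatFunc k, (∃ i, η' i ≠ 0) ∧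
          ∑ i : Fin (ρ' + 1), ratToF (η' i) * r (i : ℕ) = 0)
        ↔
       (η (Fin.last ρ) ≠ 0 ∧
        (∑ i : Fin (ρ + 1), ratToF (η i) * Dx^[(i : ℕ)] (toF P / toF Q) =
          Dy (∑ i : Fin (ρ + 1), ratToF (η i) * g (i : ℕ))) ∧
        ∀ (ρ' : ℕ) (η' : Fin (ρ' + 1) → RatFunc k), η' (Fin.last ρ') ≠ 0 →
          (∃ g' : RatFunc (RatFunc k),
            ∑ i : Fin (ρ' + 1), ratToF (η' i) * Dx^[(i : ℕ)] (toF P / toF Q) = Dy g') →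
          ρ ≤ ρ'))) :=
  stmt_8_general P Q Dy hDy hDyval Dx g r hdec hrprop hrsq
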